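/- arXiv:2002.08719 — 2 statements merged into one kernel-verified Lean document; each statement's English description precedes it below -/
import Mathlib

section
/- Let K, c, b* > 0 and let β : [0,∞) → (0,∞) be continuous with β(t) ≥ c·e^{−b*·t/2} for all t ≥ 0. Then there is no locally Lipschitz function M : [0,∞) → ℝ satisfying both M(0) < −(1/2)·√((b*)²/c² + 8K) − b*/(2c) and M'(t) ≤ β(t) K − (β(t)/2) M(t)² for almost every t > 0. -/
/-!
While `M < -√(2K)` the right-hand side `β K - β M²/2` is nonpositive, so `M` never rises above
`M 0`. Then `K / M² ≤ K / M(0)²`, and `y = -1/M` satisfies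
`y' = M'/M² ≤ -(1 - 2K/M(0)²) β / 2 ≤ -g` with `g(t) = (1 - 2K/M(0)²) c e^{-b* t/2} / 2`.
Integrating, `∫₀ᵀ g < y(0)` for every `T` because `y(T) > 0`; letting `T → ∞` gives
`∫₀^∞ g ≤ -1/M(0)`, which the assumed bound on `M 0` contradicts.
-/

open MeasureTheory Filter Set Topology NNReal

theorem AbsolutelyContinuousOnInterval.sub_le_integral_of_ae_deriv_le {f g : ℝ → ℝ} {a b : ℝ}
    (hab : a ≤ b) (hf : AbsolutelyContinuousOnInterval f a b)
    (hfg : ∀ᵐ t, t ∈ Ioo a b → deriv f t ≤ g t) (hg : IntervalIntegrable g volume a b) :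
    f b - f a ≤ ∫ t in a..b, g t := by
  rw [← hf.integral_deriv_eq_sub]
  refine intervalIntegral.integral_mono_ae_restrict hab hf.intervalIntegrable_deriv hg ?_
  rwa [← Measure.restrict_congr_set Ioo_ae_eq_Icc, EventuallyLE, ae_restrict_iff' measurableSet_Ioo]

theorem AbsolutelyContinuousOnInterval.le_of_ae_deriv_nonpos {f : ℝ → ℝ} {a b : ℝ}
    (hab : a ≤ b) (hf : AbsolutelyContinuousOnInterval f a b)
    (hd : ∀ᵐ t, t ∈ Ioo a b → deriv f t ≤ 0) : f b ≤ f a := by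
  simpa using hf.sub_le_integral_of_ae_deriv_le hab hd (intervalIntegrable_const (c := 0))

theorem AbsolutelyContinuousOnInterval.le_of_ae_deriv_nonpos_of_lt {f : ℝ → ℝ} {a b θ : ℝ}
    (hab : a ≤ b) (hf : AbsolutelyContinuousOnInterval f a b) (hθ : f a < θ)
    (hd : ∀ᵐ t, t ∈ Ioo a b → f t < θ → deriv f t ≤ 0) :
    ∀ t ∈ Icc a b, f t ≤ f a := by
  -- Continuous induction: wherever `f ≤ f a < θ`, `f` stays below `θ`, hence nonincreasing,
  -- on a right neighbourhood.
  have hcont : ContinuousOn f (Icc a b) := by simpa [uIcc_of_le hab] using hf.continuousOn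
  refine IsClosed.Icc_subset_of_forall_mem_nhdsWithin (s := {t | f t ≤ f a}) ?_
    (le_refl (f a)) ?_
  · rw [inter_comm]
    exact hcont.preimage_isClosed_of_isClosed isClosed_Icc isClosed_Iic
  rintro x ⟨hxa, hx⟩
  have hlt : ∀ᶠ t in 𝓝[>] x, f t < θ := by
    have h := (hcont x (Ico_subset_Icc_self hx)).mono (Ioo_subset_Icc_self.trans
      (Icc_subset_Icc_left hx.1))
    rw [ContinuousWithinAt, nhdsWithin_Ioo_eq_nhdsGT hx.2] at h
    exact h.eventually (gt_mem_nhds (lt_of_le_of_lt hxa hθ))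
  obtain ⟨u, hxu, hu⟩ := mem_nhdsGT_iff_exists_Ioo_subset.1 (hlt.and (Ioo_mem_nhdsGT hx.2))
  filter_upwards [Ioo_mem_nhdsGT hxu] with t ht
  have htb : t < b := (hu ht).2.2
  have hsub : uIcc x t ⊆ uIcc a b := by
    rw [uIcc_of_le ht.1.le, uIcc_of_le hab]
    exact Icc_subset_Icc hx.1 htb.le
  refine ((hf.mono hsub).le_of_ae_deriv_nonpos ht.1.le ?_).trans hxa
  filter_upwards [hd] with s hs hs_mem
  exact hs ⟨hx.1.trans_lt hs_mem.1, hs_mem.2.trans htb⟩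
    (hu ⟨hs_mem.1, hs_mem.2.trans ht.2⟩).1

lemma lipschitzOnWith_inv_Iic {m : ℝ} (hm : m < 0) :
    LipschitzOnWith (‖m‖₊ ^ 2)⁻¹ (fun x : ℝ => x⁻¹) (Iic m) := by
  refine (convex_Iic m).lipschitzOnWith_of_nnnorm_deriv_le
    (fun x hx => differentiableAt_inv (hx.trans_lt hm).ne) fun x hx => ?_
  rw [deriv_inv, nnnorm_neg, nnnorm_inv, nnnorm_pow]
  gcongr
  · exact pow_pos (nnnorm_pos.2 hm.ne) 2
  · rw [← NNReal.coe_le_coe, coe_nnnorm, coe_nnnorm, Real.norm_of_nonpos hm.le,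
      Real.norm_of_nonpos (hx.trans hm.le)]
    linarith [mem_Iic.1 hx]

theorem integral_lt_neg_inv_of_deriv_le_neg_mul_sq {f g : ℝ → ℝ} {L : ℝ≥0} {a b m : ℝ}
    (hab : a ≤ b) (hf : LipschitzOnWith L f (Icc a b)) (hm : m < 0)
    (hfm : ∀ t ∈ Icc a b, f t ≤ m)
    (hfg : ∀ᵐ t, t ∈ Ioo a b → DifferentiableAt ℝ f t ∧ deriv f t ≤ -(g t * f t ^ 2))
    (hg : IntervalIntegrable g volume a b) :
    ∫ t in a..b, g t < -(f a)⁻¹ := by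
  have hf_neg : ∀ t ∈ Icc a b, f t < 0 := fun t ht => (hfm t ht).trans_lt hm
  have hy : AbsolutelyContinuousOnInterval (fun t => -(f t)⁻¹) a b := by
    rw [← uIcc_of_le hab] at hf hfm
    exact ((lipschitzOnWith_inv_Iic hm).comp hf hfm).neg.absolutelyContinuousOnInterval
  have hy_deriv : ∀ᵐ t, t ∈ Ioo a b → deriv (fun t => -(f t)⁻¹) t ≤ -g t := by
    filter_upwards [hfg] with t ht ht_mem
    obtain ⟨hdiff, hle⟩ := ht ht_mem
    have hft := hf_neg t (Ioo_subset_Icc_self ht_mem)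
    rw [deriv.fun_neg, deriv_fun_inv'' hdiff hft.ne, neg_div, neg_neg, div_le_iff₀ (by nlinarith)]
    linarith
  have := hy.sub_le_integral_of_ae_deriv_le hab hy_deriv hg.neg
  rw [intervalIntegral.integral_neg] at this
  linarith [inv_lt_zero.2 (hf_neg b ⟨hab, le_rfl⟩)]

lemma riccati_rhs_nonpos {K β m : ℝ} (hβ : 0 ≤ β) (hm : m < -√(2 * K)) :
    β * K - β / 2 * m ^ 2 ≤ 0 := by
  have h2K : 2 * K < m ^ 2 := by simpa using Real.lt_sq_of_sqrt_lt (lt_neg.1 hm)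
  nlinarith

lemma riccati_rhs_le_neg_mul_sq {K β w m m₀ : ℝ} (hK : 0 ≤ K) (hw : 0 ≤ w) (hwβ : w ≤ β)
    (hm : m ≤ m₀) (hm₀ : m₀ < -√(2 * K)) :
    β * K - β / 2 * m ^ 2 ≤ -((1 - 2 * K / m₀ ^ 2) / 2 * w * m ^ 2) := by
  have hm₀_neg : m₀ < 0 := hm₀.trans_le (neg_nonpos.2 (Real.sqrt_nonneg _))
  have hKm₀ : 2 * K < m₀ ^ 2 := by simpa using Real.lt_sq_of_sqrt_lt (lt_neg.1 hm₀)
  have hm₀_sq : 0 < m₀ ^ 2 := by nlinarith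
  have hk : 2 * K / m₀ ^ 2 ≤ 1 := (div_le_one hm₀_sq).2 hKm₀.le
  have hmm : m₀ ^ 2 ≤ m ^ 2 := by nlinarith
  have h2K : 2 * K ≤ 2 * K / m₀ ^ 2 * m ^ 2 := by
    calc 2 * K = 2 * K / m₀ ^ 2 * m₀ ^ 2 := (div_mul_cancel₀ _ hm₀_sq.ne').symm
      _ ≤ 2 * K / m₀ ^ 2 * m ^ 2 := by gcongr
  calc β * K - β / 2 * m ^ 2 = β / 2 * (2 * K - m ^ 2) := by ring
    _ ≤ β / 2 * (2 * K / m₀ ^ 2 * m ^ 2 - m ^ 2) := by gcongr; linarith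
    _ = -((1 - 2 * K / m₀ ^ 2) / 2 * β * m ^ 2) := by ring
    _ ≤ -((1 - 2 * K / m₀ ^ 2) / 2 * w * m ^ 2) := by
      have : 0 ≤ 1 - 2 * K / m₀ ^ 2 := by linarith
      gcongr

/-- The hypothesis puts `m` below the smaller root of `c x² + b x - 2Kc`; the right-hand side of
the second conclusion is `∫₀^∞ (1 - 2K/m²) c e^{-b t/2} / 2 dt`. -/
lemma riccati_threshold {K c b m : ℝ} (hK : 0 ≤ K) (hc : 0 < c) (hb : 0 < b)
    (hm : m < -(1 / 2) * √(b ^ 2 / c ^ 2 + 8 * K) - b / (2 * c)) :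
    m < -√(2 * K) ∧ -m⁻¹ < (1 - 2 * K / m ^ 2) / 2 * (c * (2 / b)) := by
  set s := √(b ^ 2 / c ^ 2 + 8 * K)
  have hs : (c * s) ^ 2 = b ^ 2 + 8 * K * c ^ 2 := by
    rw [mul_pow, Real.sq_sqrt (by positivity)]
    field_simp
  have hcs : 2 * c * m + b < -(c * s) := by
    have := mul_lt_mul_of_pos_left hm (by positivity : 0 < 2 * c)
    field_simp at this
    linarith
  have hm_neg : m < 0 := by nlinarith [Real.sqrt_nonneg (b ^ 2 / c ^ 2 + 8 * K)]
  have hquad : 2 * K * c < c * m ^ 2 + b * m := by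
    have hcs_nonneg : 0 ≤ c * s := by positivity
    have : (c * s) ^ 2 < (2 * c * m + b) ^ 2 := by nlinarith
    nlinarith
  have h2K : 2 * K < m ^ 2 := by nlinarith
  constructor
  · rw [lt_neg, ← Real.sqrt_sq (by linarith : 0 ≤ -m), neg_sq]
    exact Real.sqrt_lt_sqrt (by positivity) h2K
  · have hbm : 0 < b * m ^ 2 := by nlinarith
    have hl : -m⁻¹ = -(b * m) / (b * m ^ 2) := by field_simp
    have hr : (1 - 2 * K / m ^ 2) / 2 * (c * (2 / b)) = (c * m ^ 2 - 2 * K * c) / (b * m ^ 2) := by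
      field_simp [hm_neg.ne]
    rw [hl, hr]
    exact div_lt_div_of_pos_right (by linarith) hbm

lemma integrableOn_exp_neg_mul_div_two_Ioi {b : ℝ} (hb : 0 < b) :
    IntegrableOn (fun t => Real.exp (-b * t / 2)) (Ioi 0) := by
  simpa only [mul_div_right_comm] using integrableOn_exp_mul_Ioi (by linarith : -b / 2 < 0) 0

lemma integral_exp_neg_mul_div_two_Ioi {b : ℝ} (hb : 0 < b) :
    ∫ t in Ioi 0, Real.exp (-b * t / 2) = 2 / b := by
  simp only [mul_div_right_comm]
  rw [integral_exp_mul_Ioi (by linarith : -b / 2 < 0) 0]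
  field_simp
  simp

theorem riccati_no_global_solution_general
    (K c bstar : ℝ) (hK : 0 < K) (hc : 0 < c) (hb : 0 < bstar)
    (β : ℝ → ℝ)
    (hβlb : ∀ t : ℝ, 0 ≤ t → c * Real.exp (-bstar * t / 2) ≤ β t) :
    ¬ ∃ M : ℝ → ℝ,
      (∀ a b : ℝ, 0 ≤ a → ∃ L : NNReal, LipschitzOnWith L M (Set.Icc a b)) ∧
      M 0 < -(1 / 2) * Real.sqrt (bstar ^ 2 / c ^ 2 + 8 * K) - bstar / (2 * c) ∧
      (∀ᵐ (t : ℝ) ∂volume, 0 < t →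
        DifferentiableAt ℝ M t ∧ deriv M t ≤ β t * K - β t / 2 * (M t) ^ 2) := by
  rintro ⟨M, hM_lip, hM0, hM_deriv⟩
  obtain ⟨hM0_lt, hM0_inv⟩ := riccati_threshold hK.le hc hb hM0
  have hM0_neg : M 0 < 0 := hM0_lt.trans_le (neg_nonpos.2 (Real.sqrt_nonneg _))
  have hw_nonneg : ∀ t, 0 ≤ c * Real.exp (-bstar * t / 2) := fun t => by positivity
  have hM_le : ∀ T, 0 ≤ T → M T ≤ M 0 := fun T hT => by
    obtain ⟨L, hL⟩ := hM_lip 0 T le_rfl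
    rw [← uIcc_of_le hT] at hL
    refine hL.absolutelyContinuousOnInterval.le_of_ae_deriv_nonpos_of_lt hT hM0_lt ?_
      T ⟨hT, le_rfl⟩
    filter_upwards [hM_deriv] with t ht ht_mem ht_lt
    exact (ht ht_mem.1).2.trans <|
      riccati_rhs_nonpos ((hw_nonneg t).trans (hβlb t ht_mem.1.le)) ht_lt
  set g := fun t => (1 - 2 * K / M 0 ^ 2) / 2 * (c * Real.exp (-bstar * t / 2))
  have hg_int : IntegrableOn g (Ioi 0) :=
    ((integrableOn_exp_neg_mul_div_two_Ioi hb).const_mul c).const_mul _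
  have hg_lt : ∀ T, 0 ≤ T → ∫ t in 0..T, g t < -(M 0)⁻¹ := fun T hT => by
    obtain ⟨L, hL⟩ := hM_lip 0 T le_rfl
    refine integral_lt_neg_inv_of_deriv_le_neg_mul_sq hT hL hM0_neg (fun t ht => hM_le t ht.1) ?_
      ((by fun_prop : Continuous g).intervalIntegrable 0 T)
    filter_upwards [hM_deriv] with t ht ht_mem
    obtain ⟨hdiff, hle⟩ := ht ht_mem.1
    refine ⟨hdiff, hle.trans ?_⟩
    simpa only [g, mul_assoc] using riccati_rhs_le_neg_mul_sq hK.le (hw_nonneg t)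
      (hβlb t ht_mem.1.le) (hM_le t ht_mem.1.le) hM0_lt
  have hg_le : ∫ t in Ioi 0, g t ≤ -(M 0)⁻¹ :=
    le_of_tendsto (intervalIntegral_tendsto_integral_Ioi 0 hg_int tendsto_id)
      ((eventually_ge_atTop 0).mono fun T hT => (hg_lt T hT).le)
  rw [integral_const_mul, integral_const_mul, integral_exp_neg_mul_div_two_Ioi hb] at hg_le
  exact lt_irrefl _ (hg_le.trans_lt hM0_inv)

/-- Deterministic core of Proposition 7.3 (finite-time wave breaking): if
`β(t) ≥ c e^{-b* t/2}` on `[0,∞)`, there is no locally Lipschitz `M` on `[0,∞)`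
with `M(0) < -(1/2)√((b*)²/c² + 8K) - b*/(2c)` satisfying
`M' ≤ β K - (β/2) M²` a.e. on `(0,∞)`. -/
theorem riccati_no_global_solution
    (K c bstar : ℝ) (hK : 0 < K) (hc : 0 < c) (hb : 0 < bstar)
    (β : ℝ → ℝ)
    (hβc : ContinuousOn β (Set.Ici (0 : ℝ)))
    (hβpos : ∀ t : ℝ, 0 ≤ t → 0 < β t)
    (hβlb : ∀ t : ℝ, 0 ≤ t → c * Real.exp (-bstar * t / 2) ≤ β t) :
    ¬ ∃ M : ℝ → ℝ,
      (∀ a b : ℝ, 0 ≤ a → ∃ L : NNReal, LipschitzOnWith L M (Set.Icc a b)) ∧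
      M 0 < -(1 / 2) * Real.sqrt (bstar ^ 2 / c ^ 2 + 8 * K) - bstar / (2 * c) ∧
      (∀ᵐ (t : ℝ) ∂volume, 0 < t →
        DifferentiableAt ℝ M t ∧ deriv M t ≤ β t * K - β t / 2 * (M t) ^ 2) :=
  riccati_no_global_solution_general K c bstar hK hc hb β hβlb
end

section
/- Let T* ∈ (0,∞), N > 0, let β : [0,T*] → (0,∞) be continuous, and let M : [0,T*) → ℝ be locally Lipschitz with |M'(t) + (β(t)/2) M(t)²| ≤ β(t) N for almost every t ∈ (0,T*), and suppose liminf_{t→T*} M(t) = −∞. Then for every ε ∈ (0,1/2) there exists t₀ ∈ (0,T*) such that for all t ∈ (t₀,T*): M(t) < 0 and (1/2 + ε) ∫_t^{T*} β(s) ds ≥ −1/M(t) ≥ (1/2 − ε) ∫_t^{T*} β(s) ds. -/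
/-!
Along the differential inequality, `(1 / M)' = -M' / M²` lies between `(1/2 - ε) β` and
`(1/2 + ε) β` wherever `N ≤ ε M²`. Since `liminf M = -∞`, some `t₀` has `M t₀ < -K` with
`N ≤ ε K²`; as `2 N ≤ K²`, the Riccati term makes `M` nonincreasing below `-K`, so `M` stays
there on `[t₀, T*)`. Integrating `(1 / M)'` over `[t, v]` and letting `v → T*` gives both bounds:
the upper one along times where `M v → -∞`, the lower one because `1 / M v < 0`.
-/

open MeasureTheory Filter Set Topology
open scoped NNReal

theorem lipschitzOnWith_inv_of_le_norm {𝕜 : Type*} [NormedDivisionRing 𝕜] {r : ℝ≥0}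
    (hr : 0 < r) : LipschitzOnWith (r ^ 2)⁻¹ (fun x : 𝕜 => x⁻¹) {x | (r : ℝ) ≤ ‖x‖} := by
  refine LipschitzOnWith.of_dist_le_mul fun x hx y hy => ?_
  have hx0 : x ≠ 0 := norm_pos_iff.mp ((NNReal.coe_pos.mpr hr).trans_le hx)
  have hy0 : y ≠ 0 := norm_pos_iff.mp ((NNReal.coe_pos.mpr hr).trans_le hy)
  have hr2 : (r : ℝ) ^ 2 ≤ ‖x‖ * ‖y‖ := by
    rw [sq]; exact mul_le_mul hx hy r.2 (norm_nonneg x)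
  rw [dist_inv_inv₀ hx0 hy0, div_eq_inv_mul, NNReal.coe_inv, NNReal.coe_pow]
  gcongr

theorem frequently_lt_of_liminf_eq_bot {α : Type*} {l : Filter α} {f : α → ℝ}
    (h : liminf (fun x => (f x : EReal)) l = ⊥) (C : ℝ) : ∃ᶠ x in l, f x < C := by
  refine (frequently_lt_of_liminf_lt (b := (C : EReal)) ?_ ?_).mono
    fun x hx => EReal.coe_lt_coe_iff.mp hx
  · isBoundedDefault
  · exact h ▸ EReal.bot_lt_coe C

theorem ContinuousOn.exists_first_ge {f : ℝ → ℝ} {a b c : ℝ} (hf : ContinuousOn f (Icc a b))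
    (hab : a ≤ b) (ha : f a < c) (hb : c ≤ f b) :
    ∃ s ∈ Ioc a b, c ≤ f s ∧ ∀ x ∈ Ico a s, f x < c := by
  set S := Icc a b ∩ f ⁻¹' Ici c
  have hS : IsClosed S := hf.preimage_isClosed_of_isClosed isClosed_Icc isClosed_Ici
  have hSne : S.Nonempty := ⟨b, ⟨hab, le_rfl⟩, hb⟩
  have hSbdd : BddBelow S := ⟨a, fun x hx => hx.1.1⟩
  obtain ⟨⟨has, hsb⟩, hcs⟩ := hS.csInf_mem hSne hSbdd
  have has' : a < sInf S := has.lt_of_ne fun h => (h ▸ hcs : c ≤ f a).not_gt ha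
  refine ⟨sInf S, ⟨has', hsb⟩, hcs, fun x hx => ?_⟩
  by_contra! hcx
  exact (csInf_le hSbdd ⟨⟨hx.1, hx.2.le.trans hsb⟩, hcx⟩).not_gt hx.2

namespace AbsolutelyContinuousOnInterval

variable {f g : ℝ → ℝ} {a b : ℝ}

theorem sub_le_integral_of_ae_deriv_le_s12 (hab : a ≤ b) (hf : AbsolutelyContinuousOnInterval f a b)
    (hg : IntervalIntegrable g volume a b) (h : ∀ᵐ x, x ∈ Ioo a b → deriv f x ≤ g x) :
    f b - f a ≤ ∫ x in a..b, g x := by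
  rw [← hf.integral_deriv_eq_sub]
  refine intervalIntegral.integral_mono_ae_restrict hab hf.intervalIntegrable_deriv hg ?_
  rwa [EventuallyLE, Measure.restrict_congr_set Ioo_ae_eq_Icc.symm,
    ae_restrict_iff' measurableSet_Ioo]

theorem integral_le_sub_of_ae_le_deriv (hab : a ≤ b) (hf : AbsolutelyContinuousOnInterval f a b)
    (hg : IntervalIntegrable g volume a b) (h : ∀ᵐ x, x ∈ Ioo a b → g x ≤ deriv f x) :
    ∫ x in a..b, g x ≤ f b - f a := by
  rw [← hf.integral_deriv_eq_sub]
  refine intervalIntegral.integral_mono_ae_restrict hab hg hf.intervalIntegrable_deriv ?_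
  rwa [EventuallyLE, Measure.restrict_congr_set Ioo_ae_eq_Icc.symm,
    ae_restrict_iff' measurableSet_Ioo]

end AbsolutelyContinuousOnInterval

theorem neg_inv_le_of_inv_sub_inv_le {β M : ℝ → ℝ} {c t T : ℝ} (htT : t < T)
    (hβ : IntervalIntegrable β volume t T) (hβ0 : ∀ x ∈ Icc t T, 0 ≤ β x) (hc : 0 ≤ c)
    (hblow : ∀ C : ℝ, ∃ᶠ v in 𝓝[<] T, M v < C)
    (h : ∀ v ∈ Ico t T, (M v)⁻¹ - (M t)⁻¹ ≤ c * ∫ s in t..v, β s) :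
    -(M t)⁻¹ ≤ c * ∫ s in t..T, β s := by
  refine le_of_forall_pos_le_add fun δ hδ => ?_
  obtain ⟨v, hMv, hv⟩ := ((hblow (-δ⁻¹)).and_eventually (Ioo_mem_nhdsLT htT)).exists
  have hδv : -(M v)⁻¹ < δ := by
    rw [← inv_neg]
    exact inv_lt_of_inv_lt₀ hδ (by linarith)
  have hmono : ∫ s in t..v, β s ≤ ∫ s in t..T, β s :=
    intervalIntegral.integral_mono_interval le_rfl hv.1.le hv.2.le
      (ae_restrict_of_forall_mem measurableSet_Ioc fun x hx => hβ0 x (Ioc_subset_Icc_self hx)) hβ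
  nlinarith [h v ⟨hv.1.le, hv.2⟩, mul_le_mul_of_nonneg_left hmono hc]

theorem le_neg_inv_of_le_inv_sub_inv {β M : ℝ → ℝ} {c t T : ℝ} (htT : t < T)
    (hβ : ContinuousOn β (Icc t T)) (hM : ∀ v ∈ Ico t T, M v < 0)
    (h : ∀ v ∈ Ico t T, c * ∫ s in t..v, β s ≤ (M v)⁻¹ - (M t)⁻¹) :
    c * ∫ s in t..T, β s ≤ -(M t)⁻¹ := by
  have hprim : ContinuousWithinAt (fun v => ∫ s in t..v, β s) (Ico t T) T :=
    (intervalIntegral.continuousOn_primitive_interval (μ := volume)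
      (hβ.integrableOn_Icc.mono_set (uIcc_of_le htT.le).subset) T right_mem_uIcc).mono
      (Ico_subset_Icc_self.trans Icc_subset_uIcc)
  refine (hprim.const_mul c).closure_le
    (by rw [closure_Ico htT.ne]; exact right_mem_Icc.2 htT.le) continuousWithinAt_const
    fun v hv => ?_
  linarith [h v hv, inv_lt_zero.mpr (hM v hv)]

theorem mem_Icc_of_abs_add_half_mul_sq_le {β N ε m d : ℝ} (hβ : 0 ≤ β)
    (hd : |d + β / 2 * m ^ 2| ≤ β * N) (hN : N ≤ ε * m ^ 2) :
    d ∈ Icc (-((1 / 2 + ε) * β * m ^ 2)) (-((1 / 2 - ε) * β * m ^ 2)) := by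
  have := mul_le_mul_of_nonneg_left hN hβ
  constructor <;> linarith [abs_le.mp hd]

def RiccatiBound (β M : ℝ → ℝ) (N : ℝ) (s : Set ℝ) : Prop :=
  ∀ᵐ x, x ∈ s → DifferentiableAt ℝ M x ∧ |deriv M x + β x / 2 * M x ^ 2| ≤ β x * N

namespace RiccatiBound

variable {β M : ℝ → ℝ} {N ε a b : ℝ} {K L : ℝ≥0}

theorem mono {s t : Set ℝ} (h : RiccatiBound β M N t) (hst : s ⊆ t) : RiccatiBound β M N s :=
  Filter.Eventually.mono h fun _ hx hxs => hx (hst hxs)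

-- Below `-K` we have `M' ≤ β (N - M² / 2) ≤ 0`, so at its first return to `-K`
-- the function would already have decreased from `M a < -K`.
theorem lt_neg_of_lt_neg (h : RiccatiBound β M N (Ioo a b)) (hM : LipschitzOnWith L M (Icc a b))
    (hβ : ∀ x ∈ Ioo a b, 0 ≤ β x) (hNK : 2 * N ≤ K ^ 2) (hab : a ≤ b) (ha : M a < -K) :
    M b < -K := by
  by_contra! hb
  obtain ⟨s, has, hMs, hlt⟩ := hM.continuousOn.exists_first_ge hab ha hb
  have hAC : AbsolutelyContinuousOnInterval M a s := by
    refine (hM.mono ?_).absolutelyContinuousOnInterval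
    rw [uIcc_of_le has.1.le]
    exact Icc_subset_Icc_right has.2
  have hdecr : M s - M a ≤ ∫ _ in a..s, (0 : ℝ) := by
    refine hAC.sub_le_integral_of_ae_deriv_le_s12 has.1.le intervalIntegrable_const ?_
    filter_upwards [h] with x hx hxs
    have hxab : x ∈ Ioo a b := ⟨hxs.1, hxs.2.trans_le has.2⟩
    have hMx : M x < -K := hlt x ⟨hxs.1.le, hxs.2⟩
    have hN : N ≤ 1 / 2 * M x ^ 2 := by nlinarith [K.2]
    simpa using (mem_Icc_of_abs_add_half_mul_sq_le (hβ x hxab) (hx hxab).2 hN).2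
  rw [intervalIntegral.integral_zero] at hdecr
  linarith

theorem inv_sub_inv_mem_Icc (h : RiccatiBound β M N (Ioo a b))
    (hM : LipschitzOnWith L M (Icc a b)) (hβ : IntervalIntegrable β volume a b)
    (hβ0 : ∀ x ∈ Ioo a b, 0 ≤ β x) (hK : 0 < K) (hMK : ∀ x ∈ Icc a b, (K : ℝ) ≤ |M x|)
    (hε : 0 ≤ ε) (hNK : N ≤ ε * K ^ 2) (hab : a ≤ b) :
    (M b)⁻¹ - (M a)⁻¹ ∈
      Icc ((1 / 2 - ε) * ∫ x in a..b, β x) ((1 / 2 + ε) * ∫ x in a..b, β x) := by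
  have hAC : AbsolutelyContinuousOnInterval M⁻¹ a b := by
    refine LipschitzOnWith.absolutelyContinuousOnInterval (K := (K ^ 2)⁻¹ * L) ?_
    rw [uIcc_of_le hab]
    exact (lipschitzOnWith_inv_of_le_norm hK).comp hM hMK
  have hderiv : ∀ᵐ x, x ∈ Ioo a b →
      deriv M⁻¹ x ∈ Icc ((1 / 2 - ε) * β x) ((1 / 2 + ε) * β x) := by
    filter_upwards [h] with x hx hxab
    obtain ⟨hdiff, hd⟩ := hx hxab
    have hMx := hMK x (Ioo_subset_Icc_self hxab)
    have hM0 : M x ≠ 0 := abs_pos.mp ((NNReal.coe_pos.mpr hK).trans_le hMx)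
    have hM2 : 0 < M x ^ 2 := by positivity
    have hK2 : (K : ℝ) ^ 2 ≤ M x ^ 2 := by
      rw [← sq_abs (M x)]
      gcongr
    obtain ⟨hlo, hhi⟩ := mem_Icc_of_abs_add_half_mul_sq_le (hβ0 x hxab) hd
      (hNK.trans (mul_le_mul_of_nonneg_left hK2 hε))
    rw [deriv_inv'' hdiff hM0]
    constructor
    · rw [le_div_iff₀ hM2]
      linarith
    · rw [div_le_iff₀ hM2]
      linarith
  constructor
  · simpa only [intervalIntegral.integral_const_mul, Pi.inv_apply] using
      hAC.integral_le_sub_of_ae_le_deriv hab (hβ.const_mul _)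
        (hderiv.mono fun x hx hxab => (hx hxab).1)
  · simpa only [intervalIntegral.integral_const_mul, Pi.inv_apply] using
      hAC.sub_le_integral_of_ae_deriv_le_s12 hab (hβ.const_mul _)
        (hderiv.mono fun x hx hxab => (hx hxab).2)

theorem neg_inv_mem_Icc_integral {T : ℝ} (h : RiccatiBound β M N (Ioo a T))
    (hM : ∀ b < T, ∃ L : ℝ≥0, LipschitzOnWith L M (Icc a b))
    (hβ : ContinuousOn β (Icc a T)) (hβ0 : ∀ x ∈ Icc a T, 0 ≤ β x)
    (hblow : ∀ C : ℝ, ∃ᶠ t in 𝓝[<] T, M t < C)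
    (hε0 : 0 ≤ ε) (hε : ε < 1 / 2) (hK : 0 < K) (hNK : N ≤ ε * K ^ 2) (ha : M a < -K)
    {t : ℝ} (ht : t ∈ Ico a T) :
    M t < 0 ∧ -(M t)⁻¹ ≤ (1 / 2 + ε) * ∫ s in t..T, β s ∧
      (1 / 2 - ε) * ∫ s in t..T, β s ≤ -(M t)⁻¹ := by
  have htrap : ∀ v ∈ Ico a T, M v < -K := fun v hv => by
    obtain ⟨L, hL⟩ := hM v hv.2
    exact (h.mono (Ioo_subset_Ioo_right hv.2.le)).lt_neg_of_lt_neg hL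
      (fun x hx => hβ0 x ⟨hx.1.le, hx.2.le.trans hv.2.le⟩) (by nlinarith) hv.1 ha
  have hMneg : ∀ v ∈ Ico t T, M v < 0 := fun v hv =>
    (htrap v ⟨ht.1.trans hv.1, hv.2⟩).trans_le (neg_nonpos.mpr K.2)
  have hβt : ContinuousOn β (Icc t T) := hβ.mono (Icc_subset_Icc_left ht.1)
  have hcmp : ∀ v ∈ Ico t T, (M v)⁻¹ - (M t)⁻¹ ∈
      Icc ((1 / 2 - ε) * ∫ s in t..v, β s) ((1 / 2 + ε) * ∫ s in t..v, β s) := fun v hv => by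
    obtain ⟨L, hL⟩ := hM v hv.2
    exact (h.mono (Ioo_subset_Ioo ht.1 hv.2.le)).inv_sub_inv_mem_Icc
      (hL.mono (Icc_subset_Icc_left ht.1))
      ((hβt.mono (Icc_subset_Icc_right hv.2.le)).intervalIntegrable_of_Icc hv.1)
      (fun x hx => hβ0 x ⟨ht.1.trans hx.1.le, hx.2.le.trans hv.2.le⟩) hK
      (fun x hx => le_abs'.mpr (Or.inl (htrap x ⟨ht.1.trans hx.1, hx.2.trans_lt hv.2⟩).le))
      hε0 hNK hv.1
  exact ⟨hMneg t ⟨le_rfl, ht.2⟩,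
    neg_inv_le_of_inv_sub_inv_le ht.2 (hβt.intervalIntegrable_of_Icc ht.2.le)
      (fun x hx => hβ0 x ⟨ht.1.trans hx.1, hx.2⟩) (by linarith) hblow fun v hv => (hcmp v hv).2,
    le_neg_inv_of_le_inv_sub_inv ht.2 hβt hMneg fun v hv => (hcmp v hv).1⟩

end RiccatiBound

theorem blow_up_rate_two_sided_bound_general
    (Tstar N : ℝ) (hT : 0 < Tstar)
    (β M : ℝ → ℝ)
    (hβc : ContinuousOn β (Set.Icc 0 Tstar))
    (hβpos : ∀ t ∈ Set.Icc (0 : ℝ) Tstar, 0 < β t)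
    (hMlip : ∀ a b : ℝ, 0 ≤ a → b < Tstar →
      ∃ L : NNReal, LipschitzOnWith L M (Set.Icc a b))
    (hineq : ∀ᵐ (t : ℝ) ∂volume, t ∈ Set.Ioo 0 Tstar →
      DifferentiableAt ℝ M t ∧ |deriv M t + β t / 2 * (M t) ^ 2| ≤ β t * N)
    (hblow : Filter.liminf (fun t => (M t : EReal))
      (nhdsWithin Tstar (Set.Iio Tstar)) = ⊥)
    (ε : ℝ) (hε0 : 0 < ε) (hε : ε < 1 / 2) :
    ∃ t₀ ∈ Set.Ioo (0 : ℝ) Tstar, ∀ t ∈ Set.Ioo t₀ Tstar,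
      M t < 0 ∧
      -(1 / M t) ≤ (1 / 2 + ε) * ∫ s in t..Tstar, β s ∧
      (1 / 2 - ε) * (∫ s in t..Tstar, β s) ≤ -(1 / M t) := by
  obtain ⟨K, hK, hNK⟩ : ∃ K : ℝ≥0, 0 < K ∧ N ≤ ε * K ^ 2 := by
    have hK1 : 1 ≤ |N| / ε + 1 := le_add_of_nonneg_left (by positivity)
    refine ⟨⟨|N| / ε + 1, by positivity⟩, show (0 : ℝ) < |N| / ε + 1 by positivity, ?_⟩
    calc N ≤ ε * (|N| / ε + 1) := by
          rw [mul_add, mul_div_cancel₀ _ hε0.ne']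
          linarith [le_abs_self N]
      _ ≤ ε * (|N| / ε + 1) ^ 2 := by gcongr; nlinarith
  have hfreq := frequently_lt_of_liminf_eq_bot hblow
  obtain ⟨t₀, hMt₀, ht₀⟩ := ((hfreq (-K)).and_eventually (Ioo_mem_nhdsLT hT)).exists
  have hsub : Icc t₀ Tstar ⊆ Icc 0 Tstar := Icc_subset_Icc_left ht₀.1.le
  refine ⟨t₀, ht₀, fun t ht => ?_⟩
  simpa only [one_div] using RiccatiBound.neg_inv_mem_Icc_integral
    (RiccatiBound.mono hineq (Ioo_subset_Ioo_left ht₀.1.le))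
    (fun b hb => hMlip t₀ b ht₀.1.le hb) (hβc.mono hsub) (fun x hx => (hβpos x (hsub hx)).le)
    hfreq hε0.le hε hK hNK hMt₀ ⟨ht.1.le, ht.2⟩

/-- The two-sided bound on `-1/M` near the blow-up time, from the proof of the
blow-up rate in Theorem 1.5: if `|M' + (β/2)M²| ≤ β N` a.e. on `(0,T*)` and
`liminf_{t→T*} M(t) = -∞`, then for every `ε ∈ (0,1/2)` there is `t₀ ∈ (0,T*)`
such that for `t ∈ (t₀,T*)`, `M(t) < 0` and
`(1/2+ε)∫ₜ^{T*} β ≥ -1/M(t) ≥ (1/2-ε)∫ₜ^{T*} β`. -/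
theorem blow_up_rate_two_sided_bound
    (Tstar N : ℝ) (hT : 0 < Tstar) (hN : 0 < N)
    (β M : ℝ → ℝ)
    (hβc : ContinuousOn β (Set.Icc 0 Tstar))
    (hβpos : ∀ t ∈ Set.Icc (0 : ℝ) Tstar, 0 < β t)
    (hMlip : ∀ a b : ℝ, 0 ≤ a → b < Tstar →
      ∃ L : NNReal, LipschitzOnWith L M (Set.Icc a b))
    (hineq : ∀ᵐ (t : ℝ) ∂volume, t ∈ Set.Ioo 0 Tstar →
      DifferentiableAt ℝ M t ∧ |deriv M t + β t / 2 * (M t) ^ 2| ≤ β t * N)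
    (hblow : Filter.liminf (fun t => (M t : EReal))
      (nhdsWithin Tstar (Set.Iio Tstar)) = ⊥)
    (ε : ℝ) (hε0 : 0 < ε) (hε : ε < 1 / 2) :
    ∃ t₀ ∈ Set.Ioo (0 : ℝ) Tstar, ∀ t ∈ Set.Ioo t₀ Tstar,
      M t < 0 ∧
      -(1 / M t) ≤ (1 / 2 + ε) * ∫ s in t..Tstar, β s ∧
      (1 / 2 - ε) * (∫ s in t..Tstar, β s) ≤ -(1 / M t) :=
  blow_up_rate_two_sided_bound_general Tstar N hT β M hβc hβpos hMlip hineq hblow ε hε0 hε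
end
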